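/- arXiv:2307.11689 — 9 statements merged into one kernel-verified Lean document; each statement's English description precedes it below -/
import Mathlib

section
/- In the 4-approval conformant manipulation construction from 3DM: given pairwise disjoint sets X, Y, Z each of size k > 0 and M ⊆ X × Y × Z in which every element of X ∪ Y ∪ Z occurs in exactly three triples, construct the election with candidates {p} ∪ (X ∪ Y ∪ Z) ∪ {a₁,a₂,a₃ : a ∈ X ∪ Y ∪ Z}, nonmanipulator votes giving (under 4-approval) one approval each to p, x, y, z for every triple (x,y,z) ∈ M, and 4k−4 approvals each to a, a₁, a₂, a₃ for every a ∈ X ∪ Y ∪ Z, and k manipulators who must each cast a vote equal to some nonmanipulator vote. Then p can be made a 4-approval winner by such manipulator votes if and only if M contains a perfect 3-dimensional matching (a subset M' ⊆ M of size k covering each element of X ∪ Y ∪ Z exactly once). -/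
/-- The ground set of a 3DM instance with `|X| = |Y| = |Z| = k`, the three
summands representing `X`, `Y`, `Z` (pairwise disjoint by construction). -/
abbrev Elem (k : ℕ) := Fin k ⊕ Fin k ⊕ Fin k

/-- Candidates for the 4-approval conformant manipulation construction:
`none` is the preferred candidate `p`, `some (inl a)` is the candidate for
ground element `a`, and `some (inr (a, i))` for `i = 0,1,2` are the three
padding candidates `a₁, a₂, a₃` of `a`. -/
abbrev Cand0 (k : ℕ) := Option (Elem k ⊕ Elem k × Fin 3)

def elC {k : ℕ} (a : Elem k) : Cand0 k := some (Sum.inl a)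

def padC {k : ℕ} (a : Elem k) (i : Fin 3) : Cand0 k := some (Sum.inr (a, i))

/-- A vote is modeled by its set of (four) approved candidates. -/
def tripleVote0 {k : ℕ} (t : Fin k × Fin k × Fin k) : Finset (Cand0 k) :=
  {none, elC (Sum.inl t.1), elC (Sum.inr (Sum.inl t.2.1)),
    elC (Sum.inr (Sum.inr t.2.2))}

def padVote0 {k : ℕ} (a : Elem k) : Finset (Cand0 k) :=
  {elC a, padC a 0, padC a 1, padC a 2}

/-- The nonmanipulator votes: for each triple `(x,y,z) ∈ M` a vote approving
`p, x, y, z`, and for each ground element `a` exactly `4k - 4` votes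
approving `a, a₁, a₂, a₃`. -/
def votes0 {k : ℕ} (M : Finset (Fin k × Fin k × Fin k)) :
    Multiset (Finset (Cand0 k)) :=
  M.val.map tripleVote0 +
    (Finset.univ : Finset (Elem k)).val.bind
      (fun a => Multiset.replicate (4 * k - 4) (padVote0 a))

/-- The 4-approval score of a candidate. -/
def appScore0 {k : ℕ} (V : Multiset (Finset (Cand0 k))) (c : Cand0 k) : ℕ :=
  @Multiset.countP _ (fun s => c ∈ s) (fun s => Finset.decidableMem c s) V

/-- `M` contains a perfect 3-dimensional matching: a subset `M' ⊆ M` of size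
`k` covering each ground element exactly once. -/
def matching3 {k : ℕ} (M : Finset (Fin k × Fin k × Fin k)) : Prop :=
  ∃ M' ⊆ M, M'.card = k ∧
    (∀ i : Fin k, (M'.filter (fun t => t.1 = i)).card = 1) ∧
    (∀ i : Fin k, (M'.filter (fun t => t.2.1 = i)).card = 1) ∧
    (∀ i : Fin k, (M'.filter (fun t => t.2.2 = i)).card = 1)


instance {k : ℕ} (c : Cand0 k) (s : Finset (Cand0 k)) : Decidable (c ∈ s) :=
  Finset.decidableMem c s

section Helpers

open Multiset

variable {k : ℕ}

lemma countP_mono' {α : Type*} (s : Multiset α) {p q : α → Prop} [DecidablePred p]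
    [DecidablePred q] (h : ∀ b, p b → q b) : countP p s ≤ countP q s := by
  rw [countP_eq_card_filter, countP_eq_card_filter]
  exact card_le_card (monotone_filter_right s h)

lemma countP_replicate' {α : Type*} (p : α → Prop) [DecidablePred p] (n : ℕ) (v : α) :
    countP p (replicate n v) = if p v then n else 0 := by
  induction n with
  | zero => simp
  | succ m ih => rw [replicate_succ, countP_cons]; split <;> simp [ih, *]

lemma countP_bind' {α β : Type*} (s : Multiset α) (f : α → Multiset β) (p : β → Prop)
    [DecidablePred p] : countP p (s.bind f) = (s.map fun a => countP p (f a)).sum := by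
  induction s using Multiset.induction with
  | empty => simp
  | cons a s ih => simp [cons_bind, countP_add, ih]

lemma mem_tv_none (t : Fin k × Fin k × Fin k) : (none : Cand0 k) ∈ tripleVote0 t := by
  simp [tripleVote0]

lemma notMem_pv_none (a : Elem k) : (none : Cand0 k) ∉ padVote0 a := by
  simp [padVote0, elC, padC]

lemma mem_tv_el (a : Elem k) (t : Fin k × Fin k × Fin k) : elC a ∈ tripleVote0 t ↔
    a = Sum.inl t.1 ∨ a = Sum.inr (Sum.inl t.2.1) ∨ a = Sum.inr (Sum.inr t.2.2) := by
  simp [tripleVote0, elC]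

lemma mem_pv_el (a b : Elem k) : elC a ∈ padVote0 b ↔ a = b := by
  simp [padVote0, elC, padC]

lemma notMem_tv_pad (a : Elem k) (i : Fin 3) (t : Fin k × Fin k × Fin k) :
    padC a i ∉ tripleVote0 t := by simp [tripleVote0, elC, padC]

lemma mem_pv_pad (a b : Elem k) (i : Fin 3) : padC a i ∈ padVote0 b ↔ a = b := by
  constructor
  · simp only [padVote0, Finset.mem_insert, Finset.mem_singleton, padC, elC]
    rintro (h | h | h | h) <;> simp_all [Prod.ext_iff]
  · rintro rfl
    fin_cases i <;> simp [padVote0, padC]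

lemma tv_inj : Function.Injective (tripleVote0 (k := k)) := by
  intro t t' h
  have e1 : elC (Sum.inl t.1) ∈ tripleVote0 t' := h ▸ by simp [mem_tv_el]
  have e2 : elC (Sum.inr (Sum.inl t.2.1)) ∈ tripleVote0 t' := h ▸ by simp [mem_tv_el]
  have e3 : elC (Sum.inr (Sum.inr t.2.2)) ∈ tripleVote0 t' := h ▸ by simp [mem_tv_el]
  rw [mem_tv_el] at e1 e2 e3
  simp only [Sum.inl.injEq, Sum.inr.injEq, reduceCtorEq, or_false, false_or] at e1 e2 e3
  exact Prod.ext e1 (Prod.ext e2 e3)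

lemma appScore0_add (V W : Multiset (Finset (Cand0 k))) (c : Cand0 k) :
    appScore0 (V + W) c = appScore0 V c + appScore0 W c := by
  unfold appScore0; exact countP_add _ _ _

lemma score_map (M'' : Finset (Fin k × Fin k × Fin k)) (c : Cand0 k) :
    appScore0 (M''.val.map tripleVote0) c =
      (M''.filter (fun t => c ∈ tripleVote0 t)).card := by
  unfold appScore0; rw [countP_map]; rfl

lemma filter_el_x (M'' : Finset (Fin k × Fin k × Fin k)) (i : Fin k) :
    M''.filter (fun t => elC (Sum.inl i) ∈ tripleVote0 t) = M''.filter (fun t => t.1 = i) :=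
  Finset.filter_congr (by intro t _; rw [mem_tv_el]; simp [eq_comm])

lemma filter_el_y (M'' : Finset (Fin k × Fin k × Fin k)) (i : Fin k) :
    M''.filter (fun t => elC (Sum.inr (Sum.inl i)) ∈ tripleVote0 t) =
      M''.filter (fun t => t.2.1 = i) :=
  Finset.filter_congr (by intro t _; rw [mem_tv_el]; simp [eq_comm])

lemma filter_el_z (M'' : Finset (Fin k × Fin k × Fin k)) (i : Fin k) :
    M''.filter (fun t => elC (Sum.inr (Sum.inr i)) ∈ tripleVote0 t) =
      M''.filter (fun t => t.2.2 = i) :=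
  Finset.filter_congr (by intro t _; rw [mem_tv_el]; simp [eq_comm])

lemma score_bind (c : Cand0 k) (n : ℕ) :
    Multiset.countP (fun s => c ∈ s)
        ((Finset.univ : Finset (Elem k)).val.bind fun a => replicate n (padVote0 a))
      = ∑ a : Elem k, if c ∈ padVote0 a then n else 0 := by
  rw [countP_bind']
  simp only [countP_replicate']
  rfl

lemma score_base (M : Finset (Fin k × Fin k × Fin k)) (c : Cand0 k) :
    appScore0 (votes0 M) c =
      (M.filter (fun t => c ∈ tripleVote0 t)).card
        + ∑ a : Elem k, if c ∈ padVote0 a then 4 * k - 4 else 0 := by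
  unfold appScore0 votes0
  rw [countP_add, countP_map, score_bind]
  rfl

lemma mem_votes0_elim {M : Finset (Fin k × Fin k × Fin k)} {v : Finset (Cand0 k)}
    (h : v ∈ votes0 M) : (∃ t ∈ M, v = tripleVote0 t) ∨ ∃ a, v = padVote0 a := by
  rcases Multiset.mem_add.mp h with h | h
  · left; rcases Multiset.mem_map.mp h with ⟨t, ht, rfl⟩; exact ⟨t, ht, rfl⟩
  · right; rcases Multiset.mem_bind.mp h with ⟨a, _, hv⟩; exact ⟨a, eq_of_mem_replicate hv⟩

lemma card_M (k : ℕ) (M : Finset (Fin k × Fin k × Fin k))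
    (h1 : ∀ i : Fin k, (M.filter (fun t => t.1 = i)).card = 3) : M.card = 3 * k := by
  rw [Finset.card_eq_sum_card_fiberwise (f := Prod.fst) (t := Finset.univ)
    (fun x _ => Finset.mem_univ _)]
  simp [h1, Finset.card_univ, mul_comm]

lemma sum_one_of_le_one {k : ℕ} (f : Fin k → ℕ) (hle : ∀ i, f i ≤ 1)
    (hsum : ∑ i, f i = k) (i : Fin k) : f i = 1 := by
  by_contra h
  have h0 : f i = 0 := by have := hle i; omega
  have h2 : ∑ j ∈ Finset.univ.erase i, f j ≤ ∑ j ∈ Finset.univ.erase i, 1 :=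
    Finset.sum_le_sum (fun j _ => hle j)
  rw [Finset.sum_const, Finset.card_erase_of_mem (Finset.mem_univ i), Finset.card_univ,
    Fintype.card_fin, smul_eq_mul, mul_one] at h2
  rw [← Finset.add_sum_erase _ f (Finset.mem_univ i), h0] at hsum
  have hk : 0 < k := i.pos
  omega

end Helpers

set_option maxHeartbeats 2000000 in
/-- In the 4-approval conformant manipulation construction from
3DM (with `k > 0` and every ground element occurring in exactly three triples
of `M`), the preferred candidate `p = none` can be made a 4-approval winner
by `k` manipulators each casting a vote equal to some nonmanipulator vote iff
`M` contains a perfect 3-dimensional matching. -/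

theorem stmt_0 (k : ℕ) (hk : 0 < k) (M : Finset (Fin k × Fin k × Fin k))
    (h1 : ∀ i : Fin k, (M.filter (fun t => t.1 = i)).card = 3)
    (h2 : ∀ i : Fin k, (M.filter (fun t => t.2.1 = i)).card = 3)
    (h3 : ∀ i : Fin k, (M.filter (fun t => t.2.2 = i)).card = 3) :
    (∃ W : Multiset (Finset (Cand0 k)), Multiset.card W = k ∧
        (∀ v ∈ W, v ∈ votes0 M) ∧
        ∀ c : Cand0 k,
          appScore0 (votes0 M + W) c ≤ appScore0 (votes0 M + W) none)
      ↔ matching3 M := by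
  have hM3k : M.card = 3 * k := card_M k M h1
  -- base scores
  have bnone : appScore0 (votes0 M) none = 3 * k := by
    rw [score_base]
    rw [Finset.filter_true_of_mem (fun t _ => mem_tv_none t)]
    simp [notMem_pv_none, hM3k]
  have bel : ∀ a : Elem k, appScore0 (votes0 M) (elC a) = 3 + (4 * k - 4) := by
    intro a
    rw [score_base]
    have hpad : (∑ b : Elem k, if elC a ∈ padVote0 b then 4 * k - 4 else 0) = 4 * k - 4 := by
      simp only [mem_pv_el]
      rw [Finset.sum_ite_eq]
      simp
    rw [hpad]
    rcases a with i | i | i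
    · rw [filter_el_x, h1]
    · rw [filter_el_y, h2]
    · rw [filter_el_z, h3]
  have bpad : ∀ (a : Elem k) (i : Fin 3),
      appScore0 (votes0 M) (padC a i) = 4 * k - 4 := by
    intro a i
    rw [score_base]
    rw [Finset.filter_false_of_mem (fun t _ => notMem_tv_pad a i t)]
    simp only [mem_pv_pad]
    rw [Finset.sum_ite_eq]
    simp
  constructor
  · -- forward: winning coalition gives a matching
    rintro ⟨W, hWcard, hWmem, hwin⟩
    have hTle : appScore0 W none ≤ k := by
      calc appScore0 W none ≤ Multiset.card W := Multiset.countP_le_card _ _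
        _ = k := hWcard
    -- every manipulator vote is a triple vote
    have hall : ∀ v ∈ W, (none : Cand0 k) ∈ v := by
      intro v hv
      by_contra hnone
      rcases mem_votes0_elim (hWmem v hv) with ⟨t, _, rfl⟩ | ⟨a, rfl⟩
      · exact hnone (mem_tv_none t)
      · -- v is a pad vote for a : contradiction
        have hca : 1 ≤ appScore0 W (elC a) := by
          unfold appScore0
          exact Multiset.countP_pos.mpr ⟨padVote0 a, hv, (mem_pv_el a a).mpr rfl⟩
        have hTlt : appScore0 W none + 1 ≤ k := by
          have hnot : 1 ≤ Multiset.countP (fun s => (none : Cand0 k) ∉ s) W :=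
            Multiset.countP_pos.mpr ⟨padVote0 a, hv, notMem_pv_none a⟩
          have := Multiset.card_eq_countP_add_countP (fun s => (none : Cand0 k) ∈ s) W
          unfold appScore0
          omega
        have := hwin (elC a)
        rw [appScore0_add, appScore0_add, bnone, bel a] at this
        omega
    have hT : appScore0 W none = k := by
      unfold appScore0
      rw [Multiset.countP_eq_card.mpr hall, hWcard]
    have hca : ∀ a : Elem k, appScore0 W (elC a) ≤ 1 := by
      intro a
      have := hwin (elC a)
      rw [appScore0_add, appScore0_add, bnone, bel a, hT] at this
      omega
    -- each vote of W is a triple vote, occurring at most once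
    have htrip : ∀ v ∈ W, ∃ t ∈ M, v = tripleVote0 t := by
      intro v hv
      rcases mem_votes0_elim (hWmem v hv) with h | ⟨a, rfl⟩
      · exact h
      · exact absurd (hall _ hv) (notMem_pv_none a)
    have hnodup : W.Nodup := by
      rw [Multiset.nodup_iff_count_le_one]
      intro v
      by_cases hv : v ∈ W
      · rcases htrip v hv with ⟨t, _, rfl⟩
        calc Multiset.count (tripleVote0 t) W
            ≤ appScore0 W (elC (Sum.inl t.1)) := by
              unfold appScore0
              exact countP_mono' W (fun b hb => hb ▸ by simp [mem_tv_el])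
          _ ≤ 1 := hca _
      · simp [Multiset.count_eq_zero_of_notMem hv]
    set M' : Finset (Fin k × Fin k × Fin k) := M.filter (fun t => tripleVote0 t ∈ W) with hM'
    have hWeq : W = M'.val.map tripleVote0 := by
      rw [Multiset.Nodup.ext hnodup (Multiset.Nodup.map tv_inj M'.nodup)]
      intro v
      constructor
      · intro hv
        rcases htrip v hv with ⟨t, htM, rfl⟩
        refine Multiset.mem_map.mpr ⟨t, ?_, rfl⟩
        rw [← Finset.mem_def, hM', Finset.mem_filter]
        exact ⟨htM, hv⟩
      · intro hv
        rcases Multiset.mem_map.mp hv with ⟨t, ht, rfl⟩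
        exact (Finset.mem_filter.mp ht).2
    have hM'card : M'.card = k := by
      have := hWcard
      rw [hWeq, Multiset.card_map] at this
      exact this
    refine ⟨M', Finset.filter_subset _ _, hM'card, ?_, ?_, ?_⟩
    · intro i
      have hle : ∀ j : Fin k, (M'.filter (fun t => t.1 = j)).card ≤ 1 := by
        intro j
        have := hca (Sum.inl j)
        rw [hWeq, score_map, filter_el_x] at this
        exact this
      have hsum : ∑ j : Fin k, (M'.filter (fun t => t.1 = j)).card = k := by
        have h := Finset.card_eq_sum_card_fiberwise (f := Prod.fst) (s := M')
          (t := Finset.univ) (fun x _ => Finset.mem_univ _)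
        rw [hM'card] at h
        exact h.symm
      exact sum_one_of_le_one _ hle hsum i
    · intro i
      have hle : ∀ j : Fin k, (M'.filter (fun t => t.2.1 = j)).card ≤ 1 := by
        intro j
        have := hca (Sum.inr (Sum.inl j))
        rw [hWeq, score_map, filter_el_y] at this
        exact this
      have hsum : ∑ j : Fin k, (M'.filter (fun t => t.2.1 = j)).card = k := by
        have h := Finset.card_eq_sum_card_fiberwise (f := fun t => t.2.1) (s := M')
          (t := Finset.univ) (fun x _ => Finset.mem_univ _)
        rw [hM'card] at h
        exact h.symm
      exact sum_one_of_le_one _ hle hsum i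
    · intro i
      have hle : ∀ j : Fin k, (M'.filter (fun t => t.2.2 = j)).card ≤ 1 := by
        intro j
        have := hca (Sum.inr (Sum.inr j))
        rw [hWeq, score_map, filter_el_z] at this
        exact this
      have hsum : ∑ j : Fin k, (M'.filter (fun t => t.2.2 = j)).card = k := by
        have h := Finset.card_eq_sum_card_fiberwise (f := fun t => t.2.2) (s := M')
          (t := Finset.univ) (fun x _ => Finset.mem_univ _)
        rw [hM'card] at h
        exact h.symm
      exact sum_one_of_le_one _ hle hsum i
  · -- backward: matching gives a winning coalition
    rintro ⟨M', hsub, hcard, hx, hy, hz⟩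
    refine ⟨M'.val.map tripleVote0, by simp [hcard], ?_, ?_⟩
    · intro v hv
      rcases Multiset.mem_map.mp hv with ⟨t, ht, rfl⟩
      exact Multiset.mem_add.mpr (Or.inl (Multiset.mem_map.mpr ⟨t, (hsub ht), rfl⟩))
    · intro c
      have wnone : appScore0 (M'.val.map tripleVote0) none = k := by
        rw [score_map, Finset.filter_true_of_mem (fun t _ => mem_tv_none t), hcard]
      rcases c with _ | a | ⟨a, i⟩
      · exact le_refl _
      · show appScore0 _ (elC a) ≤ _
        rw [appScore0_add, appScore0_add, bnone, bel a, wnone, score_map]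
        rcases a with j | j | j
        · rw [filter_el_x, hx]; omega
        · rw [filter_el_y, hy]; omega
        · rw [filter_el_z, hz]; omega
      · show appScore0 _ (padC a i) ≤ _
        rw [appScore0_add, appScore0_add, bnone, bpad a i, wnone, score_map,
          Finset.filter_false_of_mem (fun t _ => notMem_tv_pad a i t)]
        simp
        omega
end

section
/- Conformant manipulation many-one reduces to exact control by adding voters: for any voting rule E, candidate set C, voter list V, number of manipulators k, and preferred candidate p, there is a successful conformant manipulation (an assignment of each of the k manipulators to a vote occurring in V making p an E-winner of the combined election) if and only if in the election (C, V) with unregistered voter list consisting of k copies of each vote in V, one can add exactly k unregistered voters so that p is an E-winner. -/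
/-- Conformant manipulation many-one reduces to exact control by
adding voters.  For any voting rule (represented via the winner predicate
`Win U`, meaning "p is a winner of the election with vote multiset U"),
voter multiset `V` and number of manipulators `k`: there is a successful
conformant manipulation (each of the `k` manipulators casts a vote occurring
in `V` and `p` wins the combined election) iff, taking as unregistered voters
`k` copies of each vote occurring in `V`, one can add exactly `k` of the
unregistered voters to `V` so that `p` wins. -/
theorem stmt_2 {Vote : Type} [DecidableEq Vote]
    (Win : Multiset Vote → Prop) (V : Multiset Vote) (k : ℕ) :
    (∃ W : Multiset Vote, Multiset.card W = k ∧ (∀ v ∈ W, v ∈ V) ∧ Win (V + W))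
      ↔ (∃ S ≤ V.dedup.bind (fun v => Multiset.replicate k v),
          Multiset.card S = k ∧ Win (V + S)) := by
  have hcount : ∀ v : Vote,
      Multiset.count v (V.dedup.bind (fun v => Multiset.replicate k v))
        = if v ∈ V then k else 0 := by
    intro v
    rw [Multiset.count_bind]
    by_cases h : v ∈ V
    · rw [if_pos h]
      have hv : v ∈ V.dedup := Multiset.mem_dedup.mpr h
      rw [← Multiset.cons_erase hv]
      simp [Multiset.count_replicate]
      apply Multiset.sum_eq_zero
      intro x hx
      simp only [Multiset.mem_map] at hx
      obtain ⟨u, hu, rfl⟩ := hx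
      rw [if_neg]
      rintro rfl
      exact absurd hu (Multiset.Nodup.notMem_erase (Multiset.nodup_dedup V))
    · rw [if_neg h]
      apply Multiset.sum_eq_zero
      intro x hx
      simp only [Multiset.mem_map] at hx
      obtain ⟨u, hu, rfl⟩ := hx
      rw [Multiset.count_replicate, if_neg]
      rintro rfl
      exact h (Multiset.mem_dedup.mp hu)
  constructor
  · rintro ⟨W, hcard, hmem, hwin⟩
    refine ⟨W, ?_, hcard, hwin⟩
    rw [Multiset.le_iff_count]
    intro v
    rw [hcount]
    by_cases h : v ∈ W
    · rw [if_pos (hmem v h)]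
      calc Multiset.count v W ≤ Multiset.card W := Multiset.count_le_card v W
        _ = k := hcard
    · simp [Multiset.count_eq_zero_of_notMem h]
  · rintro ⟨S, hle, hcard, hwin⟩
    refine ⟨S, hcard, ?_, hwin⟩
    intro v hv
    have := Multiset.le_iff_count.mp hle v
    rw [hcount] at this
    by_contra h
    rw [if_neg h] at this
    exact absurd (Multiset.count_eq_zero.mp (Nat.le_zero.mp this)) (by simpa using hv)
end

section
/- In the 3-approval exact control by adding voters construction from 3DM: given pairwise disjoint sets X, Y, Z of size k and M ⊆ X × Y × Z, form the election with candidates {p, d₁, d₂} ∪ X ∪ Y ∪ Z, one registered voter approving {p, d₁, d₂}, and for each triple (x,y,z) ∈ M one unregistered voter approving {x, y, z}. Then p can be made a 3-approval winner by adding exactly k unregistered voters if and only if M contains a perfect matching of size k. -/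
/-- Candidates for the 3-approval exact control by adding voters
construction: `none` is the preferred candidate `p`, `some (inl a)` is the
candidate for ground element `a`, and `some (inr 0)`, `some (inr 1)` are the
dummy candidates `d₁`, `d₂`. -/
abbrev Cand3 (k : ℕ) := Option (Elem k ⊕ Fin 2)

/-- A vote is modeled by its set of (three) approved candidates. -/
def tripleVote3 {k : ℕ} (t : Fin k × Fin k × Fin k) : Finset (Cand3 k) :=
  {some (Sum.inl (Sum.inl t.1)), some (Sum.inl (Sum.inr (Sum.inl t.2.1))),
    some (Sum.inl (Sum.inr (Sum.inr t.2.2)))}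

/-- The single registered voter approves `{p, d₁, d₂}`. -/
def registered3 (k : ℕ) : Multiset (Finset (Cand3 k)) :=
  {({none, some (Sum.inr 0), some (Sum.inr 1)} : Finset (Cand3 k))}

/-- The unregistered voters: one voter approving `{x, y, z}` for each triple
`(x, y, z) ∈ M`. -/
def unregistered3 {k : ℕ} (M : Finset (Fin k × Fin k × Fin k)) :
    Multiset (Finset (Cand3 k)) :=
  M.val.map tripleVote3

/-- The 3-approval score of a candidate. -/
def appScore3 {k : ℕ} (V : Multiset (Finset (Cand3 k))) (c : Cand3 k) : ℕ :=
  @Multiset.countP _ (fun s => c ∈ s) (fun s => Finset.decidableMem c s) V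

/-!
Adding `k` voters gives `p` and the dummies score `1`, and each ground element as many points
as the chosen triples containing it. So `p` wins iff no ground element is covered twice; since
`k` triples cover `k` elements in each of `X`, `Y`, `Z`, that happens iff every element is covered
exactly once, i.e. the chosen triples form a perfect matching.
-/

open Finset

theorem Multiset.exists_subset_eq_map_of_le_map {α β : Type*} {f : α → β}
    (hf : Function.Injective f) {s : Finset α} {S : Multiset β} (hS : S ≤ s.val.map f) :
    ∃ t ⊆ s, S = t.val.map f := by
  have hnodup : S.Nodup := Multiset.nodup_of_le hS (s.nodup.map hf)
  have hsub : (⟨S, hnodup⟩ : Finset β) ⊆ s.map ⟨f, hf⟩ := Finset.val_le_iff.mp hS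
  obtain ⟨t, hts, ht⟩ := Finset.subset_map_iff.mp hsub
  exact ⟨t, hts, congrArg Finset.val ht⟩

theorem Finset.card_filter_eq_one_of_card_eq {α β : Type*} [Fintype β] [DecidableEq β]
    {s : Finset α} {f : α → β} (hcard : #s = Fintype.card β)
    (hle : ∀ b, #{a ∈ s | f a = b} ≤ 1) (b : β) : #{a ∈ s | f a = b} = 1 := by
  have hsum : ∑ b, #{a ∈ s | f a = b} = ∑ _b : β, 1 := by
    rw [← card_eq_sum_card_fiberwise fun a _ => mem_univ (f a), hcard, sum_const, card_univ,
      smul_eq_mul, mul_one]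
  exact (sum_eq_sum_iff_of_le fun b _ => hle b).mp hsum b (mem_univ b)

theorem tripleVote3_injective {k : ℕ} : Function.Injective (tripleVote3 (k := k)) := by
  rintro ⟨x, y, z⟩ t h
  have hx : some (Sum.inl (Sum.inl x)) ∈ tripleVote3 t := h ▸ by simp [tripleVote3]
  have hy : some (Sum.inl (Sum.inr (Sum.inl y))) ∈ tripleVote3 t := h ▸ by simp [tripleVote3]
  have hz : some (Sum.inl (Sum.inr (Sum.inr z))) ∈ tripleVote3 t := h ▸ by simp [tripleVote3]
  simp only [tripleVote3, mem_insert, mem_singleton, Option.some.injEq, Sum.inl.injEq,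
    Sum.inr.injEq, reduceCtorEq, or_false, false_or] at hx hy hz
  simp [hx, hy, hz]

section Scores

variable {k : ℕ} (T : Multiset (Fin k × Fin k × Fin k))

theorem appScore3_add_map_none : appScore3 (registered3 k + T.map tripleVote3) none = 1 := by
  simp [appScore3, registered3, Multiset.countP_map, tripleVote3]

theorem appScore3_add_map_dummy (j : Fin 2) :
    appScore3 (registered3 k + T.map tripleVote3) (some (Sum.inr j)) = 1 := by
  fin_cases j <;>
  simp [appScore3, registered3, Multiset.countP_map, tripleVote3]

theorem appScore3_add_map_x (i : Fin k) :
    appScore3 (registered3 k + T.map tripleVote3) (some (Sum.inl (Sum.inl i))) =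
      Multiset.card (T.filter (·.1 = i)) := by
  simp [appScore3, registered3, Multiset.countP_map, tripleVote3, eq_comm]

theorem appScore3_add_map_y (i : Fin k) :
    appScore3 (registered3 k + T.map tripleVote3) (some (Sum.inl (Sum.inr (Sum.inl i)))) =
      Multiset.card (T.filter (·.2.1 = i)) := by
  simp [appScore3, registered3, Multiset.countP_map, tripleVote3, eq_comm]

theorem appScore3_add_map_z (i : Fin k) :
    appScore3 (registered3 k + T.map tripleVote3) (some (Sum.inl (Sum.inr (Sum.inr i)))) =
      Multiset.card (T.filter (·.2.2 = i)) := by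
  simp [appScore3, registered3, Multiset.countP_map, tripleVote3, eq_comm]

theorem none_wins_add_map_iff :
    (∀ c, appScore3 (registered3 k + T.map tripleVote3) c ≤
        appScore3 (registered3 k + T.map tripleVote3) none) ↔
      (∀ i, Multiset.card (T.filter (·.1 = i)) ≤ 1) ∧
      (∀ i, Multiset.card (T.filter (·.2.1 = i)) ≤ 1) ∧
      (∀ i, Multiset.card (T.filter (·.2.2 = i)) ≤ 1) := by
  simp only [appScore3_add_map_none]
  constructor
  · intro hwin
    refine ⟨fun i => ?_, fun i => ?_, fun i => ?_⟩
    · simpa only [appScore3_add_map_x] using hwin (some (Sum.inl (Sum.inl i)))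
    · simpa only [appScore3_add_map_y] using hwin (some (Sum.inl (Sum.inr (Sum.inl i))))
    · simpa only [appScore3_add_map_z] using hwin (some (Sum.inl (Sum.inr (Sum.inr i))))
  · rintro ⟨hx, hy, hz⟩ (_ | ((i | i | i) | j))
    · exact (appScore3_add_map_none T).le
    · exact (appScore3_add_map_x T i).trans_le (hx i)
    · exact (appScore3_add_map_y T i).trans_le (hy i)
    · exact (appScore3_add_map_z T i).trans_le (hz i)
    · exact (appScore3_add_map_dummy T j).le

end Scores

/-- In the 3-approval exact control by adding voters
construction from 3DM, `p = none` can be made a 3-approval winner by adding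
exactly `k` unregistered voters iff `M` contains a perfect matching of size
`k`. -/
theorem stmt_3 (k : ℕ) (M : Finset (Fin k × Fin k × Fin k)) :
    (∃ S ≤ unregistered3 M, Multiset.card S = k ∧
        ∀ c : Cand3 k,
          appScore3 (registered3 k + S) c ≤ appScore3 (registered3 k + S) none)
      ↔ matching3 M := by
  constructor
  · rintro ⟨S, hS, hcard, hwin⟩
    obtain ⟨M', hM', rfl⟩ := Multiset.exists_subset_eq_map_of_le_map tripleVote3_injective hS
    rw [Multiset.card_map] at hcard
    obtain ⟨hx, hy, hz⟩ := (none_wins_add_map_iff M'.val).mp hwin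
    have hcard' : #M' = Fintype.card (Fin k) := hcard.trans (Fintype.card_fin k).symm
    exact ⟨M', hM', hcard, card_filter_eq_one_of_card_eq hcard' hx,
      card_filter_eq_one_of_card_eq hcard' hy, card_filter_eq_one_of_card_eq hcard' hz⟩
  · rintro ⟨M', hM', hcard, hx, hy, hz⟩
    exact ⟨M'.val.map tripleVote3, Multiset.map_le_map (val_le_iff.mpr hM'),
      by rw [Multiset.card_map, card_val, hcard],
      (none_wins_add_map_iff M'.val).mpr
        ⟨fun i => (hx i).le, fun i => (hy i).le, fun i => (hz i).le⟩⟩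
end

section
/- Under 1-approval (plurality), exact control by adding voters is solved by a greedy criterion: p can be made a plurality winner by adding exactly k voters from unregistered list U if and only if, letting a be the number of unregistered voters with p ranked first and s the plurality score of p among registered voters, there is a choice of j = min(a, k) voters for p and k − j other unregistered voters that can be distributed so that no candidate's final score exceeds s + j; equivalently, the straightforward greedy algorithm (add as many p-voters as possible, then fill with remaining voters spread to keep all other candidates' scores at most p's final score) correctly decides the problem. -/
lemma my_exists_le_card {α : Type*} (s : Multiset α) {n : ℕ}
    (h : n ≤ Multiset.card s) : ∃ t ≤ s, Multiset.card t = n := by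
  refine ⟨(s.toList.take n : Multiset α), ?_, ?_⟩
  · conv_rhs => rw [← s.coe_toList]
    exact Multiset.coe_le.mpr ((List.take_sublist n _).subperm)
  · simp only [Multiset.coe_card, List.length_take]
    rw [← Multiset.length_toList s] at h
    omega

/-- Correctness of the greedy criterion for exact control by
adding voters under plurality (1-approval).  A plurality vote is modeled by
its top candidate, so the score of `c` in a vote multiset is the multiplicity
of `c`.  Given registered voters `V`, unregistered voters `U` with `k ≤ |U|`,
let `a = ` number of unregistered voters with `p` first, `s = ` plurality
score of `p` among registered voters, and `j = min a k`.  Then `p` can be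
made a plurality winner by adding exactly `k` voters from `U` iff one can
choose `j` voters for `p` and `k - j` other unregistered voters such that no
other candidate's final score exceeds `s + j`. -/
theorem stmt_6 {C : Type} [DecidableEq C] (V U : Multiset C) (k : ℕ) (p : C)
    (hU : k ≤ Multiset.card U) :
    (∃ S ≤ U, Multiset.card S = k ∧
        ∀ c : C, (V + S).count c ≤ (V + S).count p)
      ↔ (∃ T ≤ U.filter (fun c => c ≠ p),
          Multiset.card T = k - min (U.count p) k ∧
          ∀ c : C, c ≠ p →
            V.count c + T.count c ≤ V.count p + min (U.count p) k) := by
  set a := U.count p with ha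
  constructor
  · rintro ⟨S, hS, hcard, hw⟩
    have hSp : S.count p ≤ min a k := by
      refine le_min (le_trans (Multiset.count_le_of_le p hS) le_rfl) ?_
      rw [← hcard]; exact Multiset.count_le_card p S
    set S' := S.filter (fun c => c ≠ p) with hS'
    have hcardS' : Multiset.card S' = k - S.count p := by
      have h1 : S.filter (fun c => c = p) + S' = S := by
        rw [hS']; exact Multiset.filter_add_not _ S
      have h2 : Multiset.card (S.filter (fun c => c = p)) = S.count p := by
        have : S.filter (fun c => c = p) = Multiset.replicate (S.count p) p := by
          simpa using Multiset.filter_eq' S p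
        simp [this]
      have := congrArg Multiset.card h1
      rw [Multiset.card_add, h2, hcard] at this
      omega
    have hle : k - min a k ≤ Multiset.card S' := by omega
    obtain ⟨T, hTS', hTcard⟩ := my_exists_le_card S' hle
    refine ⟨T, le_trans hTS' (Multiset.filter_le_filter _ hS), hTcard, ?_⟩
    intro c hc
    have hw' := hw c
    simp only [Multiset.count_add] at hw'
    have hTc : T.count c ≤ S.count c := by
      exact le_trans (Multiset.count_le_of_le c hTS')
        (Multiset.count_le_of_le c (Multiset.filter_le _ S))
    omega
  · rintro ⟨T, hT, hTcard, hw⟩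
    set j := min a k with hj
    have hTp : T.count p = 0 := by
      have := Multiset.count_le_of_le p hT
      rw [Multiset.count_filter, if_neg (by simp)] at this
      omega
    refine ⟨T + Multiset.replicate j p, ?_, ?_, ?_⟩
    · rw [Multiset.le_iff_count]
      intro c
      rw [Multiset.count_add, Multiset.count_replicate]
      by_cases hc : c = p
      · subst hc
        rw [hTp, if_pos rfl, zero_add]
        exact min_le_left a k
      · rw [if_neg (Ne.symm hc)]
        have := Multiset.count_le_of_le c hT
        rw [Multiset.count_filter, if_pos hc] at this
        omega
    · rw [Multiset.card_add, hTcard, Multiset.card_replicate]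
      omega
    · intro c
      by_cases hc : c = p
      · subst hc; exact le_rfl
      · have h1 : (V + (T + Multiset.replicate j p)).count c
            = V.count c + T.count c := by
          rw [Multiset.count_add, Multiset.count_add, Multiset.count_replicate,
            if_neg (fun h : p = c => hc h.symm), add_zero]
        have h2 : (V + (T + Multiset.replicate j p)).count p
            = V.count p + j := by
          simp [Multiset.count_replicate, hTp]
        rw [h1, h2]
        exact hw c hc
end

section
/- Conformant bribery many-one reduces to control by replacing voters: for any voting rule, election (C, V), bribe limit k, and candidate p, there is a successful conformant bribery of at most k voters if and only if in the instance of control by replacing voters with registered voters V, unregistered voters consisting of k copies of each vote in V, and replacement limit k, p can be made a winner by replacing at most k registered voters with an equal number of unregistered voters. -/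
lemma count_bind_rep {Vote : Type} [DecidableEq Vote] (V : Multiset Vote) (k : ℕ) (a : Vote) :
    Multiset.count a (V.dedup.bind (fun v => Multiset.replicate k v))
      = if a ∈ V then k else 0 := by
  rw [Multiset.count_bind]
  by_cases h : a ∈ V
  · simp only [h, if_true]
    rw [Multiset.sum_map_eq_nsmul_single a
      (fun a' hne _ => by rw [Multiset.count_replicate, if_neg hne])]
    simp [Multiset.count_dedup, h]
  · simp only [h, if_false]
    apply Multiset.sum_eq_zero
    intro x hx
    obtain ⟨b, hb, rfl⟩ := Multiset.mem_map.mp hx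
    rw [Multiset.count_replicate, if_neg (fun (he : b = a) => h (he ▸ Multiset.mem_dedup.mp hb))]

/-- Conformant bribery many-one reduces to control by replacing
voters.  For any voting rule (winner predicate `Win` for the distinguished
candidate `p`), voter multiset `V` and bribe limit `k`:  there is a
successful conformant bribery of at most `k` voters (remove a sub-multiset
`R` of `V` with `|R| ≤ k` and insert equally many votes, each occurring in
`V`, so that `p` wins) iff, in the control by replacing voters instance with
registered voters `V`, unregistered voters consisting of `k` copies of each
vote occurring in `V`, and replacement limit `k`, `p` can be made a winner by
replacing at most `k` registered voters with an equal number of unregistered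
voters. -/
theorem stmt_9 {Vote : Type} [DecidableEq Vote] (Win : Multiset Vote → Prop)
    (V : Multiset Vote) (k : ℕ) :
    (∃ R ≤ V, Multiset.card R ≤ k ∧
        ∃ A : Multiset Vote, Multiset.card A = Multiset.card R ∧
          (∀ v ∈ A, v ∈ V) ∧ Win (V - R + A))
      ↔ (∃ R ≤ V, Multiset.card R ≤ k ∧
          ∃ A ≤ V.dedup.bind (fun v => Multiset.replicate k v),
            Multiset.card A = Multiset.card R ∧ Win (V - R + A)) := by
  constructor
  · rintro ⟨R, hRV, hRk, A, hcard, hmem, hwin⟩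
    refine ⟨R, hRV, hRk, A, ?_, hcard, hwin⟩
    rw [Multiset.le_iff_count]
    intro a
    rw [count_bind_rep]
    by_cases h : a ∈ A
    · simp [hmem a h]
      calc Multiset.count a A ≤ Multiset.card A := Multiset.count_le_card a A
        _ ≤ k := hcard ▸ hRk
    · simp [Multiset.count_eq_zero_of_notMem h]
  · rintro ⟨R, hRV, hRk, A, hA, hcard, hwin⟩
    refine ⟨R, hRV, hRk, A, hcard, ?_, hwin⟩
    intro v hv
    have := Multiset.mem_of_le hA hv
    obtain ⟨b, hb, hv2⟩ := Multiset.mem_bind.mp this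
    exact (Multiset.eq_of_mem_replicate hv2) ▸ Multiset.mem_dedup.mp hb
end

section
/- In the modified Borda bribery instance obtained by adding to a Borda manipulation instance (with nonmanipulator votes V over q+3 candidates, where p is never ranked last in any vote of V, p scores C, and candidate a_{q+1} scores 2(q+2) + C) two extra voters each voting a_{q+1} first and p last: p can be made a Borda winner by changing the votes of at most 2 voters of V ∪ {two extra voters} (to arbitrary votes) if and only if p can be made a Borda winner in the original instance by two manipulators casting arbitrary votes. In particular, any successful bribery must change exactly the two added votes. -/
/-- The Borda score of candidate `c` from a multiset of votes over `m`
candidates.  A vote is a ranking `v : Equiv.Perm (Fin m)`, where `v c` is the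
position of candidate `c` (position `0` is first, position `m - 1` last); a
candidate in position `i` receives `m - 1 - i` points. -/
def bordaScore (m : ℕ) (V : Multiset (Equiv.Perm (Fin m))) (c : Fin m) : ℕ :=
  (V.map (fun v => m - 1 - (v c : ℕ))).sum

lemma bordaScore_add (m : ℕ) (U W : Multiset (Equiv.Perm (Fin m))) (c : Fin m) :
    bordaScore m (U + W) c = bordaScore m U c + bordaScore m W c := by
  simp [bordaScore]

lemma bordaScore_le (m : ℕ) (U : Multiset (Equiv.Perm (Fin m))) (c : Fin m) :
    bordaScore m U c ≤ Multiset.card U * (m - 1) := by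
  unfold bordaScore
  induction U using Multiset.induction with
  | empty => simp
  | cons v U ih =>
    simp only [Multiset.map_cons, Multiset.sum_cons, Multiset.card_cons]
    have : m - 1 - (v c : ℕ) ≤ m - 1 := Nat.sub_le _ _
    nlinarith

lemma bordaScore_eq_zero (m : ℕ) (U : Multiset (Equiv.Perm (Fin m))) (c : Fin m)
    (h : bordaScore m U c = 0) : ∀ v ∈ U, m - 1 ≤ (v c : ℕ) := by
  intro v hv
  unfold bordaScore at h
  rw [Multiset.sum_eq_zero_iff] at h
  have := h _ (Multiset.mem_map_of_mem _ hv)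
  omega


/-- In the modified Borda bribery instance obtained from a
Borda manipulation instance with nonmanipulator votes `V` over `q + 3`
candidates — where the preferred candidate `p` is never ranked last in any
vote of `V`, `p` scores `Cscore`, and candidate `a = a_{q+1}` scores
`2(q+2) + Cscore` — by adding two extra voters each casting a vote `w` with
`a` first and `p` last:  `p` can be made a Borda winner by changing the votes
of at most `2` voters of `V + {w, w}` to arbitrary votes iff `p` can be made
a Borda winner in the original instance by two manipulators casting arbitrary
votes.  Moreover, any successful bribery must change exactly the two added
votes. -/
theorem stmt_11 (q : ℕ) (V : Multiset (Equiv.Perm (Fin (q + 3))))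
    (p a : Fin (q + 3)) (Cscore : ℕ)
    (hnotlast : ∀ v ∈ V, (v p : ℕ) ≠ q + 2)
    (hp : bordaScore (q + 3) V p = Cscore)
    (ha : bordaScore (q + 3) V a = 2 * (q + 2) + Cscore)
    (w : Equiv.Perm (Fin (q + 3)))
    (hw1 : (w a : ℕ) = 0) (hw2 : (w p : ℕ) = q + 2) :
    ((∃ R ≤ V + {w, w}, Multiset.card R ≤ 2 ∧
        ∃ A : Multiset (Equiv.Perm (Fin (q + 3))),
          Multiset.card A = Multiset.card R ∧
          ∀ c : Fin (q + 3),
            bordaScore (q + 3) (V + {w, w} - R + A) c ≤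
              bordaScore (q + 3) (V + {w, w} - R + A) p)
      ↔ (∃ u₁ u₂ : Equiv.Perm (Fin (q + 3)),
          ∀ c : Fin (q + 3),
            bordaScore (q + 3) (V + {u₁, u₂}) c ≤
              bordaScore (q + 3) (V + {u₁, u₂}) p))
    ∧ (∀ R ≤ V + {w, w}, Multiset.card R ≤ 2 →
        ∀ A : Multiset (Equiv.Perm (Fin (q + 3))),
          Multiset.card A = Multiset.card R →
          (∀ c : Fin (q + 3),
            bordaScore (q + 3) (V + {w, w} - R + A) c ≤
              bordaScore (q + 3) (V + {w, w} - R + A) p) →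
          R = {w, w}) := by
  have hwwp : bordaScore (q + 3) {w, w} p = 0 := by
    simp [bordaScore, hw2]
  have hwwa : bordaScore (q + 3) {w, w} a = 2 * (q + 2) := by
    simp [bordaScore, hw1]; ring
  have key : ∀ R ≤ V + {w, w}, Multiset.card R ≤ 2 →
      ∀ A : Multiset (Equiv.Perm (Fin (q + 3))),
        Multiset.card A = Multiset.card R →
        (∀ c : Fin (q + 3),
          bordaScore (q + 3) (V + {w, w} - R + A) c ≤
            bordaScore (q + 3) (V + {w, w} - R + A) p) →
        R = {w, w} := by
    intro R hR hcard A hcardA hwin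
    set S := V + {w, w} - R with hSdef
    have hS : S + R = V + {w, w} := tsub_add_cancel_of_le hR
    have hpE : bordaScore (q + 3) S p + bordaScore (q + 3) R p = Cscore := by
      have := bordaScore_add (q + 3) S R p
      rw [hS, bordaScore_add, hp, hwwp] at this
      omega
    have haE : bordaScore (q + 3) S a + bordaScore (q + 3) R a
        = 2 * (q + 2) + Cscore + 2 * (q + 2) := by
      have := bordaScore_add (q + 3) S R a
      rw [hS, bordaScore_add, ha, hwwa] at this
      omega
    have hRa : bordaScore (q + 3) R a ≤ Multiset.card R * (q + 2) := bordaScore_le _ _ _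
    have hAp : bordaScore (q + 3) A p ≤ Multiset.card R * (q + 2) := by
      have := bordaScore_le (q + 3) A p
      rw [hcardA] at this
      exact this
    have hwa := hwin a
    rw [bordaScore_add, bordaScore_add] at hwa
    -- conclude card R = 2 and bordaScore R p = 0
    have hcard2 : Multiset.card R = 2 ∧ bordaScore (q + 3) R p = 0 := by
      interval_cases h : Multiset.card R <;> omega
    -- every element of R has p last, hence equals w
    have hall : ∀ r ∈ R, r = w := by
      intro r hr
      have hrp : (r p : ℕ) = q + 2 := by
        have h1 := bordaScore_eq_zero _ _ _ hcard2.2 r hr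
        have h2 : (r p : ℕ) ≤ q + 2 := Fin.is_le _
        omega
      have hmem : r ∈ V + {w, w} := Multiset.mem_of_le hR hr
      rcases Multiset.mem_add.1 hmem with h | h
      · exact absurd hrp (hnotlast r h)
      · simpa using h
    have : R = Multiset.replicate 2 w := by
      rw [Multiset.eq_replicate]
      exact ⟨hcard2.1, hall⟩
    simpa using this
  refine ⟨⟨?_, ?_⟩, key⟩
  · rintro ⟨R, hR, hcard, A, hcardA, hwin⟩
    have hRww := key R hR hcard A hcardA hwin
    subst hRww
    rw [add_tsub_cancel_right] at hwin
    have hA2 : Multiset.card A = 2 := by simpa using hcardA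
    obtain ⟨u₁, u₂, rfl⟩ := Multiset.card_eq_two.1 hA2
    exact ⟨u₁, u₂, hwin⟩
  · rintro ⟨u₁, u₂, hwin⟩
    refine ⟨{w, w}, le_add_self, by simp, {u₁, u₂}, by simp, ?_⟩
    rw [add_tsub_cancel_right]
    exact hwin
end

section
/- Consider the voting rule R on m candidates defined by: c is a winner iff (1) c is ranked first at least twice and no candidate is ranked first more often than c, or (2) every candidate is ranked first at most once and c is a winner under the scoring vector ⟨m+3, 0, …, 0, −1, −1, −1⟩. If no nonmanipulator ranks p first and there is at least one voter, then p cannot be made a winner by any conformant manipulation: p's final score under case (2) is at most 0, while the total score over all candidates equals n·m > 0 for n voters, so some candidate scores at least n > 0 and beats p; and in case (1) p is never first at least twice. -/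
/-- Number of votes ranking `c` first.  A vote is a ranking
`v : Equiv.Perm (Fin m)`, where `v c` is the position of candidate `c`
(position `0` is first). -/
def firstCount (m : ℕ) (V : Multiset (Equiv.Perm (Fin m))) (c : Fin m) : ℕ :=
  V.countP (fun v => (v c : ℕ) = 0)

/-- Score of `c` under the scoring vector `⟨m+3, 0, …, 0, -1, -1, -1⟩`:
`m + 3` points for being first and `-1` for each of the last three
positions. -/
def hybScore (m : ℕ) (V : Multiset (Equiv.Perm (Fin m))) (c : Fin m) : ℤ :=
  (m + 3 : ℤ) * firstCount m V c - V.countP (fun v => m - 3 ≤ (v c : ℕ))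


lemma filter_first_card (m : ℕ) (hm : 0 < m) (v : Equiv.Perm (Fin m)) :
    (Finset.univ.filter (fun c : Fin m => (v c : ℕ) = 0)).card = 1 := by
  have h : (Finset.univ.filter (fun c : Fin m => (v c : ℕ) = 0)) = {v.symm ⟨0, hm⟩} := by
    ext c
    simp [Fin.ext_iff, Equiv.eq_symm_apply, eq_comm]
  simp [h]

lemma filter_last_card (m : ℕ) (hm : 4 ≤ m) (v : Equiv.Perm (Fin m)) :
    (Finset.univ.filter (fun c : Fin m => m - 3 ≤ (v c : ℕ))).card = 3 := by
  have step1 : (Finset.univ.filter (fun c : Fin m => m - 3 ≤ (v c : ℕ))).card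
      = (Finset.univ.filter (fun j : Fin m => m - 3 ≤ (j : ℕ))).card := by
    apply Finset.card_bij (fun c _ => v c)
    · intro a ha; simp at ha ⊢; exact ha
    · intro a _ b _ h; exact v.injective h
    · intro b hb; exact ⟨v.symm b, by simp at hb ⊢; simpa using hb, by simp⟩
  rw [step1]
  have h2 : (Finset.univ.filter (fun j : Fin m => m - 3 ≤ (j : ℕ))).map Fin.valEmbedding
      = Finset.Ico (m - 3) m := by
    ext n
    simp only [Finset.mem_map, Finset.mem_filter, Finset.mem_univ, true_and,
      Fin.valEmbedding_apply, Finset.mem_Ico]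
    constructor
    · rintro ⟨a, ha, rfl⟩; exact ⟨ha, a.isLt⟩
    · rintro ⟨h1, h2⟩; exact ⟨⟨n, h2⟩, h1, rfl⟩
  have := congrArg Finset.card h2
  rw [Finset.card_map] at this
  rw [this, Nat.card_Ico]
  omega

lemma sum_hybScore (m : ℕ) (hm : 4 ≤ m) (U : Multiset (Equiv.Perm (Fin m))) :
    ∑ c : Fin m, hybScore m U c = (Multiset.card U : ℤ) * m := by
  induction U using Multiset.induction_on with
  | empty => simp [hybScore, firstCount]
  | cons v U ih =>
    have e1 : ∑ c : Fin m, (if (v c : ℕ) = 0 then (1:ℤ) else 0) = 1 := by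
      rw [Finset.sum_boole, filter_first_card m (by omega) v]; norm_num
    have e2 : ∑ c : Fin m, (if m - 3 ≤ (v c : ℕ) then (1:ℤ) else 0) = 3 := by
      rw [Finset.sum_boole, filter_last_card m hm v]; norm_num
    simp only [hybScore, firstCount, Multiset.countP_cons, Multiset.card_cons] at *
    push_cast
    rw [show (fun c : Fin m => ((m:ℤ) + 3) * ((U.countP (fun v => (v c : ℕ) = 0) : ℤ)
          + if (v c : ℕ) = 0 then (1:ℤ) else 0)
          - ((U.countP (fun v => m - 3 ≤ (v c : ℕ)) : ℤ)
          + if m - 3 ≤ (v c : ℕ) then (1:ℤ) else 0))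
        = fun c : Fin m => (((m:ℤ) + 3) * (U.countP (fun v => (v c : ℕ) = 0) : ℤ)
          - (U.countP (fun v => m - 3 ≤ (v c : ℕ)) : ℤ))
          + (((m:ℤ) + 3) * (if (v c : ℕ) = 0 then (1:ℤ) else 0)
          - (if m - 3 ≤ (v c : ℕ) then (1:ℤ) else 0))
        from funext fun c => by ring]
    rw [Finset.sum_add_distrib, ih, Finset.sum_sub_distrib, ← Finset.mul_sum, e1, e2]
    ring

/-- The hybrid rule `R`: `c` is a winner iff (1) `c` is ranked first at least
twice and no candidate is ranked first more often than `c`, or (2) every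
candidate is ranked first at most once and `c` has maximum score under the
scoring vector `⟨m+3, 0, …, 0, -1, -1, -1⟩`. -/
def RWinner (m : ℕ) (V : Multiset (Equiv.Perm (Fin m))) (c : Fin m) : Prop :=
  (2 ≤ firstCount m V c ∧ ∀ d, firstCount m V d ≤ firstCount m V c) ∨
    ((∀ d, firstCount m V d ≤ 1) ∧ ∀ d, hybScore m V d ≤ hybScore m V c)

/-- For the hybrid rule `R` on `m ≥ 4` candidates, if no
nonmanipulator ranks `p` first and there is at least one voter, then `p`
cannot be made a winner by any conformant manipulation (manipulators may only
cast votes identical to votes occurring among the nonmanipulators `V`). -/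
theorem stmt_12 (m : ℕ) (hm : 4 ≤ m) (V : Multiset (Equiv.Perm (Fin m)))
    (p : Fin m) (hV : V ≠ 0) (hp : ∀ v ∈ V, (v p : ℕ) ≠ 0) :
    ∀ W : Multiset (Equiv.Perm (Fin m)), (∀ v ∈ W, v ∈ V) →
      ¬ RWinner m (V + W) p := by
  intro W hW hwin
  set U := V + W with hUdef
  have hU : ∀ v ∈ U, (v p : ℕ) ≠ 0 := by
    intro v hv
    rcases Multiset.mem_add.1 hv with h | h
    · exact hp _ h
    · exact hp _ (hW _ h)
  have hfc : firstCount m U p = 0 := Multiset.countP_eq_zero.2 hU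
  rcases hwin with ⟨h2, _⟩ | ⟨_, h2⟩
  · rw [hfc] at h2; omega
  · have hscore_p : hybScore m U p ≤ 0 := by
      simp only [hybScore, hfc]
      simp
    have hsum := sum_hybScore m hm U
    have hle : ∑ c : Fin m, hybScore m U c ≤ ∑ _c : Fin m, hybScore m U p :=
      Finset.sum_le_sum fun c _ => h2 c
    rw [Finset.sum_const, Finset.card_univ, Fintype.card_fin, nsmul_eq_mul] at hle
    have hmn : (0:ℤ) < (Multiset.card U : ℤ) * m := by
      have h1 : 0 < Multiset.card U := by
        rw [hUdef, Multiset.card_add]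
        have := Multiset.card_pos.2 hV
        omega
      have : (0:ℤ) < (Multiset.card U : ℤ) := by exact_mod_cast h1
      positivity
    have : (m:ℤ) * hybScore m U p ≤ 0 := by
      have hm0 : (0:ℤ) ≤ m := by positivity
      exact mul_nonpos_of_nonneg_of_nonpos hm0 hscore_p
    omega
end

section
/- For the voting rule R defined by: c is a winner iff (1) c is first at least twice and no candidate is first more often, or (2) all candidates are first at most once and c wins under scoring vector ⟨m+3, 0, …, 0, −1, −1, −1⟩ — in the construction with candidates {p} ∪ X ∪ Y ∪ Z ∪ {d₁,…,d_{3k}} (where X, Y, Z are pairwise disjoint of size k ≥ 1 and M ⊆ X × Y × Z, |M| = 3k), registered voters: one voter p > ⋯ > d₁ > d₂ > d₃; for each i one voter x_i > ⋯ > d_{3i−2} > d_{3i−1} > d_{3i}; for each i one voter y_i > ⋯ > d_{3i−2} > d_{3i−1} > d_{3i}; for each i < k one voter z_i > ⋯ > d_{3i−2} > d_{3i−1} > d_{3i}; and one voter z_k > ⋯ > d₁ > d₂ > p; and unregistered voters: for each triple M_i = (x,y,z) one voter d_i > ⋯ > x > y > z with add limit k: p can be made an R-winner by adding at most k unregistered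 voters if and only if M contains a perfect matching of size k. -/
/-- Candidates: `none` is `p`; `some (inl (inl i))`, `some (inl (inr (inl i)))`,
`some (inl (inr (inr i)))` are `x_i`, `y_i`, `z_i`; `some (inr j)` is the
dummy `d_{j+1}` for `j < 3k`. -/
abbrev Cand13 (k : ℕ) := Option ((Fin k ⊕ Fin k ⊕ Fin k) ⊕ Fin (3 * k))

/-- Since the hybrid rule only consumes the first-ranked candidate and the
set of last-three candidates of each vote, a vote is modeled by this data. -/
abbrev Vote13 (k : ℕ) := Cand13 k × Finset (Cand13 k)

def xC {k : ℕ} (i : Fin k) : Cand13 k := some (Sum.inl (Sum.inl i))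
def yC {k : ℕ} (i : Fin k) : Cand13 k := some (Sum.inl (Sum.inr (Sum.inl i)))
def zC {k : ℕ} (i : Fin k) : Cand13 k := some (Sum.inl (Sum.inr (Sum.inr i)))
def dC {k : ℕ} (j : Fin (3 * k)) : Cand13 k := some (Sum.inr j)

/-- The last-three set `{d_{3i-2}, d_{3i-1}, d_{3i}}` (0-indexed:
`{d_{3i}, d_{3i+1}, d_{3i+2}}`). -/
def dset {k : ℕ} (i : Fin k) : Finset (Cand13 k) :=
  {dC ⟨3 * i.1, by have := i.2; omega⟩, dC ⟨3 * i.1 + 1, by have := i.2; omega⟩,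
    dC ⟨3 * i.1 + 2, by have := i.2; omega⟩}

/-- The registered voters of the construction. -/
def registered13 (k : ℕ) (hk : 1 ≤ k) : Multiset (Vote13 k) :=
  {((none : Cand13 k), dset ⟨0, hk⟩)} +
    (Finset.univ : Finset (Fin k)).val.map (fun i => (xC i, dset i)) +
    (Finset.univ : Finset (Fin k)).val.map (fun i => (yC i, dset i)) +
    ((Finset.univ.filter (fun i : Fin k => i.1 < k - 1)).val.map
      (fun i => (zC i, dset i))) +
    {(zC ⟨k - 1, by omega⟩,
      ({dC ⟨0, by omega⟩, dC ⟨1, by omega⟩, none} : Finset (Cand13 k)))}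

/-- The unregistered voter for the triple `M_i`: `d_i` first and
`x, y, z` in the last three positions. -/
def unregVote13 {k : ℕ} (Mf : Fin (3 * k) → Fin k × Fin k × Fin k)
    (i : Fin (3 * k)) : Vote13 k :=
  (dC i, {xC (Mf i).1, yC (Mf i).2.1, zC (Mf i).2.2})

def firstCount13 {k : ℕ} (V : Multiset (Vote13 k)) (c : Cand13 k) : ℕ :=
  V.countP (fun v => v.1 = c)

/-- Score under the scoring vector `⟨m+3, 0, …, 0, -1, -1, -1⟩`, where `m` is
the number of candidates. -/
def hybScore13 {k : ℕ} (V : Multiset (Vote13 k)) (c : Cand13 k) : ℤ :=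
  ((Fintype.card (Cand13 k) : ℤ) + 3) * firstCount13 V c -
    @Multiset.countP _ (fun v => c ∈ v.2) (fun v => Finset.decidableMem c v.2) V

/-- The hybrid rule `R`: `c` wins iff (1) `c` is first at least twice and no
candidate is first more often, or (2) all candidates are first at most once
and `c` has maximum score under `⟨m+3, 0, …, 0, -1, -1, -1⟩`. -/
def RWinner13 {k : ℕ} (V : Multiset (Vote13 k)) (c : Cand13 k) : Prop :=
  (2 ≤ firstCount13 V c ∧ ∀ d, firstCount13 V d ≤ firstCount13 V c) ∨
    ((∀ d, firstCount13 V d ≤ 1) ∧ ∀ d, hybScore13 V d ≤ hybScore13 V c)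

namespace S13

variable {k : ℕ}

lemma card_cand (k : ℕ) : Fintype.card (Cand13 k) = 6 * k + 1 := by
  simp [Cand13]; omega

lemma countP_singleton {α : Type*} (p : α → Prop) [DecidablePred p] (a : α) :
    ({a} : Multiset α).countP p = if p a then 1 else 0 := by
  rw [show ({a} : Multiset α) = a ::ₘ 0 from rfl, Multiset.countP_cons, Multiset.countP_zero]
  simp

lemma countP_reg (hk : 1 ≤ k) (p : Vote13 k → Prop) [DecidablePred p] :
    (registered13 k hk).countP p =
      ((if p ((none : Cand13 k), dset ⟨0, hk⟩) then 1 else 0) +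
        (Finset.univ.filter fun i : Fin k => p (xC i, dset i)).card +
        (Finset.univ.filter fun i : Fin k => p (yC i, dset i)).card +
        (Finset.univ.filter fun i : Fin k => i.1 < k - 1 ∧ p (zC i, dset i)).card +
        if p (zC ⟨k - 1, by omega⟩,
          ({dC ⟨0, by omega⟩, dC ⟨1, by omega⟩, none} : Finset (Cand13 k))) then 1 else 0) := by
  unfold registered13
  rw [Multiset.countP_add, Multiset.countP_add, Multiset.countP_add, Multiset.countP_add,
    countP_singleton, countP_singleton, Multiset.countP_map, Multiset.countP_map,
    Multiset.countP_map]
  simp only [← Finset.filter_val, Finset.filter_filter]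
  rfl

lemma countP_add_set (S : Finset (Fin (3 * k))) (Mf : Fin (3 * k) → Fin k × Fin k × Fin k)
    (p : Vote13 k → Prop) [DecidablePred p] :
    (S.val.map (unregVote13 Mf)).countP p =
      (S.filter fun i => p (unregVote13 Mf i)).card := by
  rw [Multiset.countP_map]; rfl

@[simp] lemma xC_inj {i j : Fin k} : xC i = xC j ↔ i = j := by simp [xC]
@[simp] lemma yC_inj {i j : Fin k} : yC i = yC j ↔ i = j := by simp [yC]
@[simp] lemma zC_inj {i j : Fin k} : zC i = zC j ↔ i = j := by simp [zC]
@[simp] lemma dC_inj {i j : Fin (3 * k)} : dC i = dC j ↔ i = j := by simp [dC]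
@[simp] lemma xC_ne_none {i : Fin k} : xC i ≠ none := by simp [xC]
@[simp] lemma yC_ne_none {i : Fin k} : yC i ≠ none := by simp [yC]
@[simp] lemma zC_ne_none {i : Fin k} : zC i ≠ none := by simp [zC]
@[simp] lemma dC_ne_none {i : Fin (3 * k)} : dC i ≠ none := by simp [dC]
@[simp] lemma none_ne_xC {i : Fin k} : none ≠ xC i := by simp [xC]
@[simp] lemma none_ne_yC {i : Fin k} : none ≠ yC i := by simp [yC]
@[simp] lemma none_ne_zC {i : Fin k} : none ≠ zC i := by simp [zC]
@[simp] lemma none_ne_dC {i : Fin (3 * k)} : none ≠ dC i := by simp [dC]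
@[simp] lemma xC_ne_yC {i j : Fin k} : xC i ≠ yC j := by simp [xC, yC]
@[simp] lemma xC_ne_zC {i j : Fin k} : xC i ≠ zC j := by simp [xC, zC]
@[simp] lemma yC_ne_xC {i j : Fin k} : yC i ≠ xC j := by simp [xC, yC]
@[simp] lemma yC_ne_zC {i j : Fin k} : yC i ≠ zC j := by simp [yC, zC]
@[simp] lemma zC_ne_xC {i j : Fin k} : zC i ≠ xC j := by simp [xC, zC]
@[simp] lemma zC_ne_yC {i j : Fin k} : zC i ≠ yC j := by simp [yC, zC]
@[simp] lemma dC_ne_xC {i : Fin (3*k)} {j : Fin k} : dC i ≠ xC j := by simp [dC, xC]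
@[simp] lemma dC_ne_yC {i : Fin (3*k)} {j : Fin k} : dC i ≠ yC j := by simp [dC, yC]
@[simp] lemma dC_ne_zC {i : Fin (3*k)} {j : Fin k} : dC i ≠ zC j := by simp [dC, zC]
@[simp] lemma xC_ne_dC {i : Fin (3*k)} {j : Fin k} : xC j ≠ dC i := by simp [dC, xC]
@[simp] lemma yC_ne_dC {i : Fin (3*k)} {j : Fin k} : yC j ≠ dC i := by simp [dC, yC]
@[simp] lemma zC_ne_dC {i : Fin (3*k)} {j : Fin k} : zC j ≠ dC i := by simp [dC, zC]

@[simp] lemma mem_dset {j : Fin (3 * k)} {i : Fin k} :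
    dC j ∈ dset i ↔ j.1 = 3 * i.1 ∨ j.1 = 3 * i.1 + 1 ∨ j.1 = 3 * i.1 + 2 := by
  simp [dset, dC, Fin.ext_iff]

@[simp] lemma xC_notMem_dset {j : Fin k} {i : Fin k} : xC j ∉ dset i := by
  simp [dset, dC, xC]
@[simp] lemma yC_notMem_dset {j : Fin k} {i : Fin k} : yC j ∉ dset i := by
  simp [dset, dC, yC]
@[simp] lemma zC_notMem_dset {j : Fin k} {i : Fin k} : zC j ∉ dset i := by
  simp [dset, dC, zC]
@[simp] lemma none_notMem_dset {i : Fin k} : (none : Cand13 k) ∉ dset i := by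
  simp [dset, dC]

lemma filter_lt_and_eq (i : Fin k) :
    (Finset.univ.filter fun a : Fin k => a.1 < k - 1 ∧ a = i).card
      = if i.1 < k - 1 then 1 else 0 := by
  have : (Finset.univ.filter fun a : Fin k => a.1 < k - 1 ∧ a = i)
      = if i.1 < k - 1 then {i} else ∅ := by
    split <;> rename_i h <;> ext a
    · simp only [Finset.mem_filter, Finset.mem_univ, true_and, Finset.mem_singleton]
      constructor
      · rintro ⟨_, rfl⟩; rfl
      · rintro rfl; exact ⟨h, rfl⟩
    · simp only [Finset.mem_filter, Finset.mem_univ, true_and, Finset.notMem_empty,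
        iff_false, not_and]
      rintro h2 rfl; exact h h2
  rw [this]
  split <;> simp

section Counts
variable (hk : 1 ≤ k) (S : Finset (Fin (3 * k))) (Mf : Fin (3 * k) → Fin k × Fin k × Fin k)

lemma fc_none :
    firstCount13 (registered13 k hk + S.val.map (unregVote13 Mf)) none = 1 := by
  unfold firstCount13
  rw [Multiset.countP_add, countP_reg, countP_add_set]
  simp [unregVote13]

lemma fc_xC (i : Fin k) :
    firstCount13 (registered13 k hk + S.val.map (unregVote13 Mf)) (xC i) = 1 := by
  unfold firstCount13
  rw [Multiset.countP_add, countP_reg, countP_add_set]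
  simp [unregVote13, Finset.filter_eq']

lemma fc_yC (i : Fin k) :
    firstCount13 (registered13 k hk + S.val.map (unregVote13 Mf)) (yC i) = 1 := by
  unfold firstCount13
  rw [Multiset.countP_add, countP_reg, countP_add_set]
  simp [unregVote13, Finset.filter_eq']

lemma fc_zC (i : Fin k) :
    firstCount13 (registered13 k hk + S.val.map (unregVote13 Mf)) (zC i) = 1 := by
  unfold firstCount13
  rw [Multiset.countP_add, countP_reg, countP_add_set]
  simp only [unregVote13]
  by_cases h : i.1 < k - 1
  · have h2 : ¬((⟨k - 1, by omega⟩ : Fin k) = i) := by simp [Fin.ext_iff]; omega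
    simp [h, h2, filter_lt_and_eq]
  · have h2 : (⟨k - 1, by omega⟩ : Fin k) = i := by
      have := i.2; rw [Fin.ext_iff]; simp; omega
    simp [h, h2, filter_lt_and_eq]

lemma fc_dC (j : Fin (3*k)) :
    firstCount13 (registered13 k hk + S.val.map (unregVote13 Mf)) (dC j) ≤ 1 := by
  unfold firstCount13
  rw [Multiset.countP_add, countP_reg, countP_add_set]
  simp [unregVote13, Finset.filter_eq']
  split <;> simp

lemma fc_le_one (c : Cand13 k) :
    firstCount13 (registered13 k hk + S.val.map (unregVote13 Mf)) c ≤ 1 := by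
  rcases c with _ | (i | i | i) | j
  · exact (fc_none hk S Mf).le
  · exact (fc_xC hk S Mf i).le
  · exact (fc_yC hk S Mf i).le
  · exact (fc_zC hk S Mf i).le
  · exact fc_dC hk S Mf j

def lc (V : Multiset (Vote13 k)) (c : Cand13 k) : ℕ :=
  @Multiset.countP _ (fun v => c ∈ v.2) (fun v => Finset.decidableMem c v.2) V

lemma hybScore_eq (Vs : Multiset (Vote13 k)) (c : Cand13 k) :
    hybScore13 Vs c = (6 * k + 4) * (firstCount13 Vs c : ℤ) - (lc Vs c : ℤ) := by
  unfold hybScore13 lc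
  rw [card_cand]
  push_cast
  ring

lemma lc_none : lc (registered13 k hk + S.val.map (unregVote13 Mf)) none = 1 := by
  unfold lc
  rw [Multiset.countP_add, countP_reg, countP_add_set]
  simp [unregVote13]

lemma lc_xC (j : Fin k) :
    lc (registered13 k hk + S.val.map (unregVote13 Mf)) (xC j)
      = (S.filter fun i => (Mf i).1 = j).card := by
  unfold lc
  rw [Multiset.countP_add, countP_reg, countP_add_set]
  simp [unregVote13]
  have : (Finset.filter (fun i => j = (Mf i).1) S) = Finset.filter (fun i => (Mf i).1 = j) S := by
    apply Finset.filter_congr; intro i _; simp [eq_comm]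
  rw [this]

lemma lc_yC (j : Fin k) :
    lc (registered13 k hk + S.val.map (unregVote13 Mf)) (yC j)
      = (S.filter fun i => (Mf i).2.1 = j).card := by
  unfold lc
  rw [Multiset.countP_add, countP_reg, countP_add_set]
  simp [unregVote13]
  have : (Finset.filter (fun i => j = (Mf i).2.1) S) = Finset.filter (fun i => (Mf i).2.1 = j) S := by
    apply Finset.filter_congr; intro i _; simp [eq_comm]
  rw [this]

lemma lc_zC (j : Fin k) :
    lc (registered13 k hk + S.val.map (unregVote13 Mf)) (zC j)
      = (S.filter fun i => (Mf i).2.2 = j).card := by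
  unfold lc
  rw [Multiset.countP_add, countP_reg, countP_add_set]
  simp [unregVote13]
  have : (Finset.filter (fun i => j = (Mf i).2.2) S) = Finset.filter (fun i => (Mf i).2.2 = j) S := by
    apply Finset.filter_congr; intro i _; simp [eq_comm]
  rw [this]

lemma lc_dC (j : Fin (3*k)) :
    1 ≤ lc (registered13 k hk + S.val.map (unregVote13 Mf)) (dC j) := by
  unfold lc
  rw [Multiset.countP_add, countP_reg, countP_add_set]
  have hj := j.2
  have h2 : 0 < (Finset.univ.filter fun i : Fin k =>
      dC j ∈ ((xC i, dset i) : Vote13 k).2).card :=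
    Finset.card_pos.mpr ⟨⟨j.1 / 3, by omega⟩, by simp; omega⟩
  omega

end Counts
end S13

/-- In the control by adding voters construction for the hybrid
rule (with `k ≥ 1` and `M = (M_1, …, M_{3k})` a list of triples), `p = none`
can be made an `R`-winner by adding at most `k` unregistered voters iff `M`
contains a perfect matching of size `k` (a set `S` of `k` triple-indices
covering each of `x_j, y_j, z_j` exactly once). -/
theorem stmt_13 (k : ℕ) (hk : 1 ≤ k)
    (Mf : Fin (3 * k) → Fin k × Fin k × Fin k) :
    (∃ S : Finset (Fin (3 * k)), S.card ≤ k ∧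
        RWinner13 (registered13 k hk + S.val.map (unregVote13 Mf)) none)
      ↔ (∃ S : Finset (Fin (3 * k)), S.card = k ∧
          (∀ j : Fin k, (S.filter (fun i => (Mf i).1 = j)).card = 1) ∧
          (∀ j : Fin k, (S.filter (fun i => (Mf i).2.1 = j)).card = 1) ∧
          (∀ j : Fin k, (S.filter (fun i => (Mf i).2.2 = j)).card = 1)) := by
  constructor
  · rintro ⟨S, hS, hwin⟩
    rcases hwin with ⟨h2, _⟩ | ⟨_, hsc⟩
    · have h1 := S13.fc_none hk S Mf
      omega
    · have keyx : ∀ j : Fin k, 1 ≤ (S.filter fun i => (Mf i).1 = j).card := by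
        intro j
        have h := hsc (xC j)
        rw [S13.hybScore_eq, S13.hybScore_eq, S13.fc_none, S13.fc_xC,
          S13.lc_none, S13.lc_xC] at h
        push_cast at h
        omega
      have keyy : ∀ j : Fin k, 1 ≤ (S.filter fun i => (Mf i).2.1 = j).card := by
        intro j
        have h := hsc (yC j)
        rw [S13.hybScore_eq, S13.hybScore_eq, S13.fc_none, S13.fc_yC,
          S13.lc_none, S13.lc_yC] at h
        push_cast at h
        omega
      have keyz : ∀ j : Fin k, 1 ≤ (S.filter fun i => (Mf i).2.2 = j).card := by
        intro j
        have h := hsc (zC j)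
        rw [S13.hybScore_eq, S13.hybScore_eq, S13.fc_none, S13.fc_zC,
          S13.lc_none, S13.lc_zC] at h
        push_cast at h
        omega
      have hsumx : ∑ j : Fin k, (S.filter fun i => (Mf i).1 = j).card = S.card :=
        (Finset.card_eq_sum_card_fiberwise (fun x _ => Finset.mem_univ ((Mf x).1))).symm
      have hsumy : ∑ j : Fin k, (S.filter fun i => (Mf i).2.1 = j).card = S.card :=
        (Finset.card_eq_sum_card_fiberwise (fun x _ => Finset.mem_univ ((Mf x).2.1))).symm
      have hsumz : ∑ j : Fin k, (S.filter fun i => (Mf i).2.2 = j).card = S.card :=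
        (Finset.card_eq_sum_card_fiberwise (fun x _ => Finset.mem_univ ((Mf x).2.2))).symm
      have hklex : k ≤ S.card := by
        calc k = ∑ _j : Fin k, 1 := by simp
        _ ≤ ∑ j : Fin k, (S.filter fun i => (Mf i).1 = j).card :=
            Finset.sum_le_sum (fun j _ => keyx j)
        _ = S.card := hsumx
      have hcard : S.card = k := le_antisymm hS hklex
      have honex := (Finset.sum_eq_sum_iff_of_le (fun j (_ : j ∈ Finset.univ) => keyx j)).mp
        (by rw [hsumx, hcard]; simp)
      have honey := (Finset.sum_eq_sum_iff_of_le (fun j (_ : j ∈ Finset.univ) => keyy j)).mp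
        (by rw [hsumy, hcard]; simp)
      have honez := (Finset.sum_eq_sum_iff_of_le (fun j (_ : j ∈ Finset.univ) => keyz j)).mp
        (by rw [hsumz, hcard]; simp)
      exact ⟨S, hcard, fun j => (honex j (Finset.mem_univ j)).symm,
        fun j => (honey j (Finset.mem_univ j)).symm,
        fun j => (honez j (Finset.mem_univ j)).symm⟩
  · rintro ⟨S, hcard, hx, hy, hz⟩
    refine ⟨S, hcard.le, Or.inr ⟨S13.fc_le_one hk S Mf, fun d => ?_⟩⟩
    rw [S13.hybScore_eq, S13.hybScore_eq, S13.fc_none, S13.lc_none]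
    rcases d with _ | (i | i | i) | j
    · rw [S13.fc_none, S13.lc_none]
    · show (6 * (k:ℤ) + 4) * (firstCount13 _ (xC i) : ℤ) - (S13.lc _ (xC i) : ℤ) ≤ _
      rw [S13.fc_xC, S13.lc_xC, hx i]
    · show (6 * (k:ℤ) + 4) * (firstCount13 _ (yC i) : ℤ) - (S13.lc _ (yC i) : ℤ) ≤ _
      rw [S13.fc_yC, S13.lc_yC, hy i]
    · show (6 * (k:ℤ) + 4) * (firstCount13 _ (zC i) : ℤ) - (S13.lc _ (zC i) : ℤ) ≤ _
      rw [S13.fc_zC, S13.lc_zC, hz i]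
    · show (6 * (k:ℤ) + 4) * (firstCount13 _ (dC j) : ℤ) - (S13.lc _ (dC j) : ℤ) ≤ _
      have h1 := S13.fc_dC hk S Mf j
      have h2 := S13.lc_dC hk S Mf j
      have h3 : firstCount13 (registered13 k hk + S.val.map (unregVote13 Mf)) (dC j) = 0
          ∨ firstCount13 (registered13 k hk + S.val.map (unregVote13 Mf)) (dC j) = 1 := by
        omega
      rcases h3 with h3 | h3 <;> rw [h3] <;> push_cast <;> omega
end

section
/- For 3-approval conformant manipulation with k ≥ 1 manipulators and at least one nonmanipulator approving p, the following reduction to b-matching is correct: let fs_p = score(p) + k, for each candidate a ≠ p let b(a) = fs_p − score(a), and build a multigraph on the candidates other than p with, for each distinct nonmanipulator vote approving {p, a, b}, k parallel edges between a and b. Then p can be made a 3-approval winner by k conformant manipulator votes if and only if all b(a) are nonnegative and the multigraph has a b-edge-matching of size at least k (a set of k edges with each vertex a incident to at most b(a) of them). -/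
/-- The `3`-approval score of candidate `c`: each vote is modeled by the set
of (three) candidates it approves. -/
def appScore {C : Type} [DecidableEq C] (V : Multiset (Finset C)) (c : C) : ℕ :=
  V.countP (fun s => c ∈ s)

/-- Correctness of the reduction of 3-approval conformant
manipulation to `b`-matching.  With `k ≥ 1` manipulators and at least one
nonmanipulator vote approving `p`, let `fs_p = score(p) + k` and, for each
candidate `a ≠ p`, `b(a) = fs_p - score(a)`.  Then `p` can be made a
3-approval winner by `k` conformant manipulator votes iff all `b(a)` are
nonnegative and there is a `b`-edge-matching of size `k` in the multigraph
that has, for each nonmanipulator vote approving `p` together with `a` and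
`b`, `k` parallel edges between `a` and `b` — i.e., iff there is a multiset
`W` of `k` votes from `V`, each approving `p`, such that every candidate
`a ≠ p` is "incident" to at most `b(a)` of the chosen votes/edges. -/
theorem stmt_16 {C : Type} [DecidableEq C] (V : Multiset (Finset C)) (k : ℕ)
    (hk : 1 ≤ k) (p : C) (hp : ∃ v ∈ V, p ∈ v) :
    (∃ W : Multiset (Finset C), Multiset.card W = k ∧ (∀ v ∈ W, v ∈ V) ∧
        ∀ c : C, appScore (V + W) c ≤ appScore (V + W) p)
      ↔ ((∀ a : C, a ≠ p → (appScore V a : ℤ) ≤ (appScore V p : ℤ) + k) ∧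
         ∃ W : Multiset (Finset C), Multiset.card W = k ∧
           (∀ v ∈ W, v ∈ V ∧ p ∈ v) ∧
           ∀ a : C, a ≠ p →
             (W.countP (fun s => a ∈ s) : ℤ) ≤
               ((appScore V p : ℤ) + k) - (appScore V a : ℤ)) := by

  obtain ⟨v0, hv0V, hv0p⟩ := hp
  constructor
  · rintro ⟨W, hcard, hWV, hwin⟩
    have hkey : ∀ a : C, appScore V a + W.countP (fun s => a ∈ s) ≤
        appScore V p + W.countP (fun s => p ∈ s) := by
      intro a
      have := hwin a
      simpa [appScore, Multiset.countP_add] using this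
    have hWp : W.countP (fun s => p ∈ s) ≤ k := hcard ▸ Multiset.countP_le_card _ _
    constructor
    · intro a _
      have h1 := hkey a
      have : appScore V a ≤ appScore V p + k := by omega
      exact_mod_cast by exact_mod_cast this
    · set r := W.countP (fun s => p ∉ s) with hr
      set W' : Multiset (Finset C) :=
        W.filter (fun s => p ∈ s) + Multiset.replicate r v0 with hW'
      have hsplit : W.countP (fun s => p ∈ s) + r = k := by
        rw [hr, ← hcard]
        simp [Multiset.countP_eq_card_filter, ← Multiset.card_add, Multiset.filter_add_not]
      refine ⟨W', ?_, ?_, ?_⟩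
      · rw [hW']
        simp [Multiset.card_replicate, Multiset.countP_eq_card_filter] at hsplit ⊢
        omega
      · intro v hv
        rw [hW'] at hv
        rcases Multiset.mem_add.1 hv with h | h
        · rcases Multiset.mem_filter.1 h with ⟨h1, h2⟩
          exact ⟨hWV v h1, h2⟩
        · rcases Multiset.eq_of_mem_replicate h with rfl
          exact ⟨hv0V, hv0p⟩
      · intro a _
        have hfil : (W.filter (fun s => p ∈ s)).countP (fun s => a ∈ s) ≤
            W.countP (fun s => a ∈ s) :=
          Multiset.countP_le_of_le _ (Multiset.filter_le _ _)
        have hrep : (Multiset.replicate r v0).countP (fun s => a ∈ s) ≤ r := by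
          have := Multiset.countP_le_card (fun s => a ∈ s) (Multiset.replicate r v0)
          simpa using this
        have hW'c : W'.countP (fun s => a ∈ s) ≤ W.countP (fun s => a ∈ s) + r := by
          rw [hW', Multiset.countP_add]; omega
        have h1 := hkey a
        have : appScore V a + W'.countP (fun s => a ∈ s) ≤ appScore V p + k := by omega
        have h2 : (appScore V a : ℤ) + W'.countP (fun s => a ∈ s) ≤
            (appScore V p : ℤ) + k := by exact_mod_cast this
        linarith
  · rintro ⟨_, W, hcard, hW, hbound⟩
    refine ⟨W, hcard, fun v hv => (hW v hv).1, ?_⟩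
    have hWp : W.countP (fun s => p ∈ s) = k := by
      rw [← hcard]
      apply Multiset.countP_eq_card.2
      intro v hv; exact (hW v hv).2
    intro c
    by_cases hc : c = p
    · subst hc; exact le_refl _
    · have h1 := hbound c hc
      have h2 : (appScore V c : ℤ) + W.countP (fun s => c ∈ s) ≤
          (appScore V p : ℤ) + k := by linarith
      have h3 : appScore V c + W.countP (fun s => c ∈ s) ≤
          appScore V p + k := by exact_mod_cast h2
      simp only [appScore, Multiset.countP_add]
      simp only [appScore] at h3
      omega
end
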